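/- arXiv:2509.17835 — 4 statements merged into one kernel-verified Lean document; each statement's English description precedes it below -/
import Mathlib

section
/- Let (G, ≺) be an ordered graph ordered along a Hamiltonian path, and let I₁ ≺ I₂ ≺ … ≺ I_k be a partition of V(G) into k nonempty intervals (listed in increasing order) such that there is an edge of G between a vertex of Iᵢ and a vertex of Iⱼ only when |i − j| ≤ 1. Then (G, ≺) contains an increasing induced path of size k. -/
/-- `(G, ≺)` (on `Fin n` with its natural order) is ordered along a Hamiltonian path:
consecutive vertices are adjacent. -/
def OrderedAlongHamPath {n : ℕ} (G : SimpleGraph (Fin n)) : Prop :=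
  ∀ i : Fin n, ∀ h : (i : ℕ) + 1 < n, G.Adj i ⟨(i : ℕ) + 1, h⟩

/-- An induced path of size `s`: `s` distinct vertices, adjacent iff consecutive. -/
def IsInducedPath {n : ℕ} (G : SimpleGraph (Fin n)) {s : ℕ} (v : Fin s → Fin n) : Prop :=
  Function.Injective v ∧
    ∀ i j : Fin s, G.Adj (v i) (v j) ↔ ((i : ℕ) + 1 = (j : ℕ) ∨ (j : ℕ) + 1 = (i : ℕ))

/-- An increasing induced path. -/
def IsIncreasingInducedPath {n : ℕ} (G : SimpleGraph (Fin n)) {s : ℕ} (v : Fin s → Fin n) : Prop :=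
  StrictMono v ∧
    ∀ i j : Fin s, G.Adj (v i) (v j) ↔ ((i : ℕ) + 1 = (j : ℕ) ∨ (j : ℕ) + 1 = (i : ℕ))

/-- A set of edges is non-crossing. -/
def NonCrossing {n : ℕ} (F : Set (Sym2 (Fin n))) : Prop :=
  ¬ ∃ a b c d : Fin n, a < c ∧ c < b ∧ b < d ∧ s(a, b) ∈ F ∧ s(c, d) ∈ F

/-- `(G, ≺)` is `k`-non-crossing: the edge set partitions into `k` non-crossing sets. -/
def KNonCrossing {n : ℕ} (G : SimpleGraph (Fin n)) (k : ℕ) : Prop :=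
  ∃ E : Fin k → Set (Sym2 (Fin n)),
    (⋃ i, E i) = G.edgeSet ∧ (∀ i j, i ≠ j → Disjoint (E i) (E j)) ∧ ∀ i, NonCrossing (E i)

/-- An interval of the ordering. -/
def IsInterval {n : ℕ} (I : Set (Fin n)) : Prop :=
  ∀ a ∈ I, ∀ b ∈ I, ∀ x : Fin n, a ≤ x → x ≤ b → x ∈ I

/-- The gap of `u` towards `I` is at least `g`. -/
def HasGapAtLeast {n : ℕ} (G : SimpleGraph (Fin n)) (u : Fin n) (I : Set (Fin n)) (g : ℕ) : Prop :=
  ∃ a b : Fin n, a ∈ I ∧ b ∈ I ∧ a ≤ b ∧ g ≤ (b : ℕ) - (a : ℕ) ∧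
    ∀ x ∈ Set.Icc a b, ¬ G.Adj u x

/-- The edges of `F` crossing the cut just after position `t`. -/
def CutAt {n : ℕ} (F : Set (Sym2 (Fin n))) (t : Fin n) : Set (Sym2 (Fin n)) :=
  {e | e ∈ F ∧ ∃ a b : Fin n, e = s(a, b) ∧ a ≤ t ∧ t < b}

/-- The set of edges `F` (on ordered vertex set `Fin n`) has cutwidth at most `c`. -/
def CutwidthLE {n : ℕ} (F : Set (Sym2 (Fin n))) (c : ℕ) : Prop :=
  ∀ t : Fin n, (CutAt F t).ncard ≤ c

open scoped Classical

/-- Largest neighbour step. -/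
noncomputable def nextV {n : ℕ} (G : SimpleGraph (Fin n))
    (hham : OrderedAlongHamPath G) (x : Fin n) : Fin n :=
  if h : (x : ℕ) + 1 < n then
    (Finset.univ.filter (fun y => G.Adj x y)).max'
      ⟨⟨(x : ℕ) + 1, h⟩, Finset.mem_filter.2 ⟨Finset.mem_univ _, hham x h⟩⟩
  else x

lemma nextV_adj {n : ℕ} (G : SimpleGraph (Fin n)) (hham : OrderedAlongHamPath G)
    (x : Fin n) (h : (x : ℕ) + 1 < n) : G.Adj x (nextV G hham x) := by
  rw [nextV, dif_pos h]
  have := Finset.max'_mem (Finset.univ.filter (fun y => G.Adj x y))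
      ⟨⟨(x : ℕ) + 1, h⟩, Finset.mem_filter.2 ⟨Finset.mem_univ _, hham x h⟩⟩
  simpa using this

lemma nextV_max {n : ℕ} (G : SimpleGraph (Fin n)) (hham : OrderedAlongHamPath G)
    (x : Fin n) (h : (x : ℕ) + 1 < n) (y : Fin n) (hy : G.Adj x y) :
    y ≤ nextV G hham x := by
  rw [nextV, dif_pos h]
  exact Finset.le_max' _ _ (Finset.mem_filter.2 ⟨Finset.mem_univ _, hy⟩)

lemma nextV_lt {n : ℕ} (G : SimpleGraph (Fin n)) (hham : OrderedAlongHamPath G)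
    (x : Fin n) (h : (x : ℕ) + 1 < n) : x < nextV G hham x := by
  have h1 : (⟨(x : ℕ) + 1, h⟩ : Fin n) ≤ nextV G hham x :=
    nextV_max G hham x h _ (hham x h)
  have : (x : ℕ) < (x : ℕ) + 1 := Nat.lt_succ_self _
  exact lt_of_lt_of_le (by exact this) h1
/-- If `V(G)` is partitioned into nonempty intervals `I 0 ≺ I 1 ≺ … ≺ I (k-1)`
with edges only between intervals at distance at most 1, and `(G, ≺)` is ordered along a
Hamiltonian path, then `G` contains an increasing induced path of size `k`. -/
theorem stmt0 {n k : ℕ} (G : SimpleGraph (Fin n)) (hham : OrderedAlongHamPath G)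
    (I : Fin k → Set (Fin n))
    (hne : ∀ i, (I i).Nonempty)
    (hint : ∀ i, IsInterval (I i))
    (hcover : (⋃ i, I i) = Set.univ)
    (hord : ∀ i j : Fin k, i < j → ∀ x ∈ I i, ∀ y ∈ I j, x < y)
    (hedge : ∀ i j : Fin k, ∀ x ∈ I i, ∀ y ∈ I j, G.Adj x y →
      (i : ℕ) ≤ (j : ℕ) + 1 ∧ (j : ℕ) ≤ (i : ℕ) + 1) :
    ∃ v : Fin k → Fin n, IsIncreasingInducedPath G v := by
  rcases Nat.eq_zero_or_pos k with hk | hk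
  · subst hk
    exact ⟨Fin.elim0, fun i => i.elim0, fun i => i.elim0⟩
  have hn : 0 < n := by
    obtain ⟨x, _⟩ := hne ⟨0, hk⟩
    exact x.pos
  -- every vertex lies in some interval
  have hmem : ∀ x : Fin n, ∃ s : Fin k, x ∈ I s := by
    intro x
    have : x ∈ (⋃ i, I i) := by rw [hcover]; trivial
    simpa using this
  set z : Fin n := ⟨0, hn⟩ with hz
  set f : Fin n → Fin n := nextV G hham with hf
  set w : ℕ → Fin n := fun m => f^[m] z with hw
  -- interval index grows by at most one
  have hidx : ∀ m : ℕ, ∃ s : Fin k, (s : ℕ) ≤ m ∧ w m ∈ I s := by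
    intro m
    induction m with
    | zero =>
        obtain ⟨s, hs⟩ := hmem z
        refine ⟨s, ?_, hs⟩
        by_contra hc
        have hs0 : (0 : ℕ) < (s : ℕ) := Nat.pos_of_ne_zero fun h => hc (by omega)
        obtain ⟨y, hy⟩ := hne ⟨0, hk⟩
        have := hord ⟨0, hk⟩ s (by simpa [Fin.lt_def] using hs0) y hy z hs
        exact absurd this (by simp [Fin.lt_def, hz, Fin.le_def])
    | succ m ih =>
        obtain ⟨s, hsm, hsI⟩ := ih
        have hsucc : w (m + 1) = f (w m) := by
          simp [hw, Function.iterate_succ_apply']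
        by_cases h : (w m : ℕ) + 1 < n
        · obtain ⟨s', hs'⟩ := hmem (w (m + 1))
          refine ⟨s', ?_, hs'⟩
          have hadj : G.Adj (w m) (w (m + 1)) := by
            rw [hsucc]; exact nextV_adj G hham _ h
          have := (hedge s s' (w m) hsI (w (m + 1)) hs' hadj).2
          omega
        · refine ⟨s, by omega, ?_⟩
          have : f (w m) = w m := by rw [hf, nextV, dif_neg h]
          rw [hsucc, this]; exact hsI
  -- before step k-1 we are not at the last vertex
  have hlast : ∀ m : ℕ, m < k - 1 → (w m : ℕ) + 1 < n := by
    intro m hm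
    obtain ⟨s, hsm, hsI⟩ := hidx m
    obtain ⟨y, hy⟩ := hne ⟨k - 1, by omega⟩
    have hlt : w m < y := hord s ⟨k - 1, by omega⟩ (by simp [Fin.lt_def]; omega) _ hsI y hy
    have : (w m : ℕ) < (y : ℕ) := hlt
    have := y.isLt
    omega
  -- strict increase at each of the first k-1 steps
  have hstep : ∀ m : ℕ, m < k - 1 → w m < w (m + 1) := by
    intro m hm
    have hsucc : w (m + 1) = f (w m) := by
      simp [hw, Function.iterate_succ_apply']
    rw [hsucc]
    exact nextV_lt G hham _ (hlast m hm)
  have hmono : ∀ a b : ℕ, a < b → b ≤ k - 1 → w a < w b := by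
    intro a b hab hbk
    induction b with
    | zero => omega
    | succ b ih =>
        rcases Nat.lt_or_ge a b with h | h
        · exact lt_trans (ih h (by omega)) (hstep b (by omega))
        · have : a = b := by omega
          subst this
          exact hstep a (by omega)
  -- adjacency to consecutive
  have hadjc : ∀ m : ℕ, m < k - 1 → G.Adj (w m) (w (m + 1)) := by
    intro m hm
    have hsucc : w (m + 1) = f (w m) := by
      simp [hw, Function.iterate_succ_apply']
    rw [hsucc]
    exact nextV_adj G hham _ (hlast m hm)
  -- non-adjacency for far-apart vertices
  have hfar : ∀ a b : ℕ, a + 2 ≤ b → b ≤ k - 1 → ¬ G.Adj (w a) (w b) := by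
    intro a b hab hbk hadj
    have h1 : w b ≤ f (w a) := nextV_max G hham _ (hlast a (by omega)) _ hadj
    have h2 : w (a + 1) = f (w a) := by
      simp [hw, Function.iterate_succ_apply']
    rw [← h2] at h1
    have h3 : w (a + 1) < w b := hmono (a + 1) b (by omega) hbk
    exact absurd h1 (not_le.mpr h3)
  refine ⟨fun i => w (i : ℕ), ?_, ?_⟩
  · intro i j hij
    exact hmono i j (by exact hij) (by have := j.isLt; omega)
  · intro i j
    constructor
    · intro hadj
      by_contra hc
      push_neg at hc
      rcases Nat.lt_trichotomy (i : ℕ) (j : ℕ) with h | h | h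
      · have : (i : ℕ) + 2 ≤ (j : ℕ) := by omega
        exact hfar i j this (by have := j.isLt; omega) hadj
      · rw [show (i : Fin k) = j from Fin.ext h] at hadj
        exact G.irrefl hadj
      · have : (j : ℕ) + 2 ≤ (i : ℕ) := by omega
        exact hfar j i this (by have := i.isLt; omega) hadj.symm
    · rintro (h | h)
      · have := hadjc i (by have := j.isLt; omega)
        rwa [h] at this
      · have := hadjc j (by have := i.isLt; omega)
        rw [h] at this
        exact this.symm
end

section
/- Let T be a finite rooted tree and ≺ a linear order on V(T) compatible with T, such that the ordered graph (T, ≺) has cutwidth at most c and T has depth at most p. Then |V(T)| ≤ C(p + c − 1, c), where C(·,·) denotes the binomial coefficient. -/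
/-!
Number the vertices along the order, so that the root comes last. For each gap `k` between
consecutive vertices, record the multiset of depths of the upper endpoints of the tree edges
crossing the gap; it has at most `c` elements, all in `{0, …, p - 2}`. Moving the gap past a
non-root vertex `v` removes the edges from the children of `v` (upper endpoint at depth `d(v)`)
and adds the edge from `v` to its parent (depth `d(v) - 1`), so the multiset strictly increases
in the Dershowitz–Manna order for which shallower is larger; the last cut is empty. Hence the `m`
cuts give distinct multisets of size at most `c` over `p - 1` values, of which there are
`C(p + c - 1, c)`.
-/

theorem Nat.rel_of_forall_rel_succ_of_lt_of_le {β : Type*} (r : β → β → Prop) [IsTrans β r]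
    {f : ℕ → β} {N : ℕ} (h : ∀ k, k < N → r (f k) (f (k + 1))) {a b : ℕ} (hab : a < b)
    (hb : b ≤ N) : r (f a) (f b) := by
  induction hab with
  | refl => exact h a hb
  | step _ ih => exact _root_.trans (ih (by omega)) (h _ (by omega))

namespace Multiset

variable {α : Type*} [Preorder α]

instance : IsTrans (Multiset α) IsDershowitzMannaLT :=
  ⟨fun _ _ _ => IsDershowitzMannaLT.trans⟩

theorem isDershowitzMannaLT_irrefl (M : Multiset α) : ¬ M.IsDershowitzMannaLT M := by
  classical
  rintro ⟨X, Y, Z, hZ, hXY, hXZ, hYZ⟩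
  obtain rfl : Y = Z := add_left_cancel (hXY.symm.trans hXZ)
  obtain ⟨y, hy⟩ := Finset.exists_maximal (s := Y.toFinset) (by simpa using hZ)
  obtain ⟨z, hz, hyz⟩ := hYZ y (by simpa using hy.prop)
  exact hy.not_gt (by simpa using hz) hyz

end Multiset

theorem Fintype.card_le_card_sym_of_injective {ι α : Type*} [Fintype ι] [Fintype α]
    [DecidableEq α] {k : ℕ} (f : ι → Multiset α) (hf : Function.Injective f)
    (hk : ∀ i, Multiset.card (f i) ≤ k) (a : α) (ha : ∀ i, a ∉ f i) :
    Fintype.card ι ≤ Fintype.card (Sym α k) := by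
  let pad : ι → Sym α k := fun i =>
    ⟨f i + .replicate (k - Multiset.card (f i)) a, by
      rw [Multiset.card_add, Multiset.card_replicate]; have := hk i; omega⟩
  have hpad : ∀ i, (pad i : Multiset α).filter (· ≠ a) = f i := fun i => by
    have hfa : (f i).filter (· ≠ a) = f i :=
      Multiset.filter_eq_self.2 fun x hx hxa => ha i (hxa ▸ hx)
    have hra : (Multiset.replicate (k - Multiset.card (f i)) a).filter (· ≠ a) = 0 :=
      Multiset.filter_eq_nil.2 fun x hx => by simp [Multiset.eq_of_mem_replicate hx]
    rw [Sym.coe_mk, Multiset.filter_add, hfa, hra, add_zero]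
  refine Fintype.card_le_of_injective pad fun i j hij => hf ?_
  rw [← hpad i, ← hpad j, hij]

theorem mem_cutAt_iff {n : ℕ} {F : Set (Sym2 (Fin n))} {t : Fin n} {e : Sym2 (Fin n)} :
    e ∈ CutAt F t ↔ e ∈ F ∧ e.inf ≤ t ∧ t < e.sup := by
  constructor
  · rintro ⟨he, a, b, rfl, hat, htb⟩
    exact ⟨he, inf_le_left.trans hat, lt_sup_of_lt_right htb⟩
  · rintro ⟨he, hinf, hsup⟩
    exact ⟨he, e.inf, e.sup, (Sym2.sortEquiv.symm_apply_apply e).symm, hinf, hsup⟩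

namespace SimpleGraph

section Cuts

variable {n : ℕ} (G : SimpleGraph (Fin n)) [DecidableRel G.Adj] {α : Type*} (h : Fin n → α)

def cutLevels (k : ℕ) : Multiset α :=
  (G.edgeFinset.val.filter fun e => (e.inf : ℕ) ≤ k ∧ k < e.sup).map (h ·.sup)

theorem card_cutLevels (t : Fin n) :
    Multiset.card (G.cutLevels h t) = (CutAt G.edgeSet t).ncard := by
  have hcut : CutAt G.edgeSet t =
      ↑(G.edgeFinset.filter fun e => (e.inf : ℕ) ≤ t ∧ (t : ℕ) < e.sup) := by
    ext e
    simp only [mem_cutAt_iff, Finset.coe_filter, mem_edgeFinset, Set.mem_ofPred_eq, Fin.le_def,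
      Fin.lt_def]
  rw [hcut, Set.ncard_coe_finset, cutLevels, Multiset.card_map]
  rfl

theorem cutLevels_eq_zero {k : ℕ} (hk : n ≤ k + 1) : G.cutLevels h k = 0 := by
  refine Multiset.map_eq_zero.2 (Multiset.filter_eq_nil.2 fun e _ he => ?_)
  have := e.sup.isLt
  omega

variable {G h}

theorem exists_adj_of_mem_cutLevels {k : ℕ} {x : α} (hx : x ∈ G.cutLevels h k) :
    ∃ a b, G.Adj a b ∧ a < b ∧ h b = x := by
  obtain ⟨e, he, rfl⟩ := Multiset.mem_map.1 hx
  have hadj : e ∈ G.edgeSet := by simpa using (Multiset.mem_filter.1 he).1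
  induction e with
  | _ a b =>
    rcases le_total a b with hab | hba
    · exact ⟨a, b, hadj, lt_of_le_of_ne hab hadj.ne, by simp [sup_eq_right.2 hab]⟩
    · exact ⟨b, a, hadj.symm, lt_of_le_of_ne hba hadj.symm.ne, by simp [sup_eq_left.2 hba]⟩

variable [Preorder α]

def HasRisingEdges (G : SimpleGraph (Fin n)) (h : Fin n → α) : Prop :=
  ∀ v : Fin n, (∃ u, v < u) → ∃ w, G.Adj v w ∧ v < w ∧ h v < h w

theorem HasRisingEdges.cutLevels_ne_zero (hG : G.HasRisingEdges h) {k : ℕ} (hk : k + 1 < n) :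
    G.cutLevels h k ≠ 0 := by
  obtain ⟨w, hadj, hvw, -⟩ := hG ⟨k, by omega⟩ ⟨⟨k + 1, hk⟩, by simp [Fin.lt_def]⟩
  have hmem : s(⟨k, by omega⟩, w) ∈
      G.edgeFinset.val.filter fun e => (e.inf : ℕ) ≤ k ∧ k < e.sup := by
    simp [hadj, inf_eq_left.2 hvw.le, sup_eq_right.2 hvw.le, Fin.lt_def.1 hvw]
  rw [cutLevels, Ne, Multiset.map_eq_zero]
  exact fun h0 => Multiset.notMem_zero _ (h0 ▸ hmem)

theorem HasRisingEdges.isDershowitzMannaLT_cutLevels_succ (hG : G.HasRisingEdges h) {k : ℕ}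
    (hk : k + 2 < n) : (G.cutLevels h k).IsDershowitzMannaLT (G.cutLevels h (k + 1)) := by
  set v : Fin n := ⟨k + 1, by omega⟩
  obtain ⟨w, hadj, hvw, hlevel⟩ := hG v ⟨⟨k + 2, hk⟩, by simp [v, Fin.lt_def]⟩
  set E := G.edgeFinset.val
  let P : ℕ → Sym2 (Fin n) → Prop := fun k e => (e.inf : ℕ) ≤ k ∧ k < e.sup
  have hsplit : ∀ i j, G.cutLevels h i = ((E.filter (P i)).filter (P j)).map (h ·.sup) +
      ((E.filter (P i)).filter (¬ P j ·)).map (h ·.sup) := fun i j => by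
    rw [← Multiset.map_add, Multiset.filter_add_not]; rfl
  have hvw_mem : s(v, w) ∈ (E.filter (P (k + 1))).filter (¬ P k ·) := by
    simp [E, P, v, hadj, inf_eq_left.2 hvw.le, sup_eq_right.2 hvw.le, Fin.lt_def.1 hvw]
  refine ⟨((E.filter (P k)).filter (P (k + 1))).map (h ·.sup),
    ((E.filter (P k)).filter (¬ P (k + 1) ·)).map (h ·.sup),
    ((E.filter (P (k + 1))).filter (¬ P k ·)).map (h ·.sup), ?_, hsplit k (k + 1), ?_, ?_⟩
  · exact fun h0 => Multiset.notMem_zero _ (h0 ▸ Multiset.mem_map_of_mem _ hvw_mem)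
  · rw [hsplit (k + 1) k]
    congr 2
    rw [Multiset.filter_filter, Multiset.filter_filter]
    exact Multiset.filter_congr fun _ _ => and_comm
  · intro _ hy
    obtain ⟨e, he, rfl⟩ := Multiset.mem_map.1 hy
    obtain ⟨⟨-, hcross⟩, hcross'⟩ := Multiset.mem_filter.1 he |>.imp_left Multiset.mem_filter.1
    have he_sup : e.sup = v := Fin.ext <| by
      simp only [P] at hcross hcross'
      show (e.sup : ℕ) = k + 1
      omega
    refine ⟨_, Multiset.mem_map_of_mem _ hvw_mem, ?_⟩
    simpa [he_sup, sup_eq_right.2 hvw.le] using hlevel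

theorem HasRisingEdges.injective_cutLevels (hG : G.HasRisingEdges h) :
    Function.Injective fun t : Fin n => G.cutLevels h t := by
  refine .of_lt_imp_ne fun s t (hst : (s : ℕ) < t) heq => ?_
  have := t.isLt
  by_cases ht : (t : ℕ) + 1 < n
  · have hlt := Nat.rel_of_forall_rel_succ_of_lt_of_le Multiset.IsDershowitzMannaLT
      (f := G.cutLevels h) (N := n - 2)
      (fun k hk => hG.isDershowitzMannaLT_cutLevels_succ (by omega)) hst (by omega)
    exact Multiset.isDershowitzMannaLT_irrefl _ (heq ▸ hlt)
  · exact hG.cutLevels_ne_zero (by omega) (heq.trans (cutLevels_eq_zero G h (by omega)))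

end Cuts

section RootedTrees

variable {V : Type*} {G T : SimpleGraph V} {r v w : V}

theorem Connected.exists_adj_dist_add_one_eq (hG : G.Connected) (hv : v ≠ r) :
    ∃ w, G.Adj v w ∧ G.dist r w + 1 = G.dist r v := by
  obtain ⟨p, hp⟩ := hG.exists_walk_length_eq_dist v r
  obtain ⟨w, hadj, q, rfl⟩ := Walk.exists_eq_cons_of_ne hv p
  refine ⟨w, hadj, le_antisymm ?_ ?_⟩
  · calc G.dist r w + 1 ≤ q.length + 1 := by rw [dist_comm]; exact Nat.succ_le_succ (dist_le q)
      _ = G.dist r v := by rw [dist_comm, ← hp, Walk.length_cons]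
  · calc G.dist r v ≤ G.dist r w + G.dist w v := hG.dist_triangle
      _ = G.dist r w + 1 := by rw [dist_eq_one_iff_adj.2 hadj.symm]

variable [LinearOrder V]

/-- In a tree, `u` is a proper ancestor of `v` iff `u ≠ v` lies on a geodesic from `r` to `v`. -/
def IsCompatibleOrder (T : SimpleGraph V) (r : V) : Prop :=
  ∀ u v : V, u ≠ v → T.dist r u + T.dist u v = T.dist r v → v < u

theorem IsCompatibleOrder.lt_root (hc : T.IsCompatibleOrder r) (hv : v ≠ r) : v < r :=
  hc r v hv.symm (by simp)

theorem IsCompatibleOrder.lt_of_adj_of_dist_add_one_eq (hc : T.IsCompatibleOrder r)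
    (hadj : T.Adj v w) (hd : T.dist r w + 1 = T.dist r v) : v < w :=
  hc w v hadj.ne.symm (by rw [dist_eq_one_iff_adj.2 hadj.symm, hd])

theorem IsCompatibleOrder.dist_eq_dist_add_one_of_adj_of_lt (hT : T.IsTree)
    (hc : T.IsCompatibleOrder r) (hadj : T.Adj v w) (hvw : v < w) :
    T.dist r v = T.dist r w + 1 :=
  (hT.dist_eq_dist_add_one_of_adj r hadj).resolve_right fun hd =>
    lt_asymm hvw (hc.lt_of_adj_of_dist_add_one_eq hadj.symm hd.symm)

theorem IsCompatibleOrder.hasRisingEdges {m : ℕ} {T : SimpleGraph (Fin m)} {r : Fin m}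
    {α : Type*} [Preorder α] {h : Fin m → α} (hT : T.IsTree) (hc : T.IsCompatibleOrder r)
    (hh : ∀ v w, T.dist r w < T.dist r v → h v < h w) : T.HasRisingEdges h := by
  rintro v ⟨u, hvu⟩
  have hv : v ≠ r := by
    rintro rfl
    exact lt_asymm hvu (hc.lt_root hvu.ne')
  obtain ⟨w, hadj, hd⟩ := hT.connected.exists_adj_dist_add_one_eq hv
  exact ⟨w, hadj, hc.lt_of_adj_of_dist_add_one_eq hadj hd, hh v w (by omega)⟩

end RootedTrees

end SimpleGraph

theorem stmt7_general {m c p : ℕ} (T : SimpleGraph (Fin m)) (hT : T.IsTree)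
    (r : Fin m)
    (hcompat : ∀ u v : Fin m, u ≠ v → T.dist r u + T.dist u v = T.dist r v → v < u)
    (hcw : CutwidthLE T.edgeSet c)
    (hdepth : ∀ v : Fin m, T.dist r v + 1 ≤ p) :
    m ≤ Nat.choose (p + c - 1) c := by
  classical
  have hc : T.IsCompatibleOrder r := hcompat
  have hp : 0 < p := by have := hdepth r; omega
  let depth : Fin m → (Fin p)ᵒᵈ := fun v =>
    OrderDual.toDual ⟨T.dist r v, by have := hdepth v; omega⟩
  have hrising : T.HasRisingEdges depth :=
    hc.hasRisingEdges hT fun v w hvw => OrderDual.toDual_lt_toDual.2 (Fin.mk_lt_mk.2 hvw)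
  have hdeepest : ∀ t : Fin m, OrderDual.toDual ⟨p - 1, by omega⟩ ∉ T.cutLevels depth t := by
    intro t hmem
    obtain ⟨a, b, hadj, hab, hb⟩ := T.exists_adj_of_mem_cutLevels hmem
    have hb : T.dist r b = p - 1 := Fin.mk.inj_iff.1 (OrderDual.toDual.injective hb)
    have := hc.dist_eq_dist_add_one_of_adj_of_lt hT hadj hab
    have := hdepth a
    omega
  calc m = Fintype.card (Fin m) := (Fintype.card_fin m).symm
    _ ≤ Fintype.card (Sym (Fin p)ᵒᵈ c) :=
      Fintype.card_le_card_sym_of_injective _ hrising.injective_cutLevels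
        (fun t => (T.card_cutLevels depth t).trans_le (hcw t)) _ hdeepest
    _ = (p + c - 1).choose c := by simp [Sym.card_sym_eq_choose]

/-- a rooted tree with a compatible vertex order (descendants come before
their ancestors) of cutwidth at most `c` and depth at most `p` has at most
`C(p + c - 1, c)` vertices.  In a tree, `u` lies on the (unique) path from the root `r`
to `v` iff `dist r u + dist u v = dist r v`. -/
theorem stmt7 {m c p : ℕ} (hm : 0 < m) (T : SimpleGraph (Fin m)) (hT : T.IsTree)
    (r : Fin m)
    (hcompat : ∀ u v : Fin m, u ≠ v → T.dist r u + T.dist u v = T.dist r v → v < u)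
    (hcw : CutwidthLE T.edgeSet c)
    (hdepth : ∀ v : Fin m, T.dist r v + 1 ≤ p) :
    m ≤ Nat.choose (p + c - 1) c :=
  stmt7_general T hT r hcompat hcw hdepth
end

section
/- Let G be an n-vertex graph ordered along a Hamiltonian path v₁ ≺ … ≺ vₙ and let k be a positive integer. If every edge vᵢvⱼ of G satisfies |j − i| ≤ (n − 1)/k, then G contains an increasing induced path of size at least k. -/
open Classical in
/-- Greedy step: the largest neighbor of `u` above `u`, or `u` itself. -/
noncomputable def gnext {n : ℕ} (G : SimpleGraph (Fin n)) (u : Fin n) : Fin n :=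
  if h : (Finset.univ.filter fun v => G.Adj u v ∧ u < v).Nonempty
    then (Finset.univ.filter fun v => G.Adj u v ∧ u < v).max' h else u

lemma gnext_mem {n : ℕ} (G : SimpleGraph (Fin n)) (u v : Fin n)
    (h : G.Adj u v) (huv : u < v) : G.Adj u (gnext G u) ∧ u < gnext G u := by
  classical
  have hne : (Finset.univ.filter fun v => G.Adj u v ∧ u < v).Nonempty :=
    ⟨v, by simp [h, huv]⟩
  have := Finset.max'_mem _ hne
  simp only [Finset.mem_filter] at this
  rw [gnext]
  rw [dif_pos hne]
  exact this.2

lemma gnext_le {n : ℕ} (G : SimpleGraph (Fin n)) (u v : Fin n)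
    (h : G.Adj u v) (huv : u < v) : v ≤ gnext G u := by
  classical
  have hne : (Finset.univ.filter fun w => G.Adj u w ∧ u < w).Nonempty :=
    ⟨v, by simp [h, huv]⟩
  rw [gnext, dif_pos hne]
  exact Finset.le_max' _ _ (by simp [h, huv])

lemma le_gnext {n : ℕ} (G : SimpleGraph (Fin n)) (u : Fin n) : u ≤ gnext G u := by
  classical
  rw [gnext]
  split
  · next h =>
    have := Finset.max'_mem _ h
    simp only [Finset.mem_filter] at this
    exact le_of_lt this.2.2
  · exact le_refl u

lemma gnext_last {n : ℕ} (G : SimpleGraph (Fin n)) (hn : 0 < n) :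
    gnext G ⟨n - 1, by omega⟩ = ⟨n - 1, by omega⟩ := by
  classical
  rw [gnext]
  split
  · next h =>
    obtain ⟨v, hv⟩ := h
    simp only [Finset.mem_filter] at hv
    have := hv.2.2
    have hvlt := v.isLt
    simp only [Fin.lt_def] at this
    omega
  · rfl

/-- if every edge `v_i v_j` of an `n`-vertex graph ordered along a
Hamiltonian path satisfies `|j - i| ≤ (n - 1) / k` (equivalently `|j - i| * k ≤ n - 1`),
then `G` contains an increasing induced path of size at least `k`. -/
theorem stmt10 {n k : ℕ} (hn : 2 ≤ n) (hk : 0 < k) (G : SimpleGraph (Fin n))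
    (hham : OrderedAlongHamPath G)
    (hshort : ∀ i j : Fin n, G.Adj i j → ((j : ℤ) - (i : ℤ)).natAbs * k ≤ n - 1) :
    ∃ s : ℕ, k ≤ s ∧ ∃ w : Fin s → Fin n, IsIncreasingInducedPath G w := by
  classical
  have hn1 : n - 1 < n := by omega
  set last : Fin n := ⟨n - 1, hn1⟩ with hlastdef
  set f : ℕ → Fin n := fun i => (gnext G)^[i] ⟨0, by omega⟩ with hf
  have hfs : ∀ i, f (i + 1) = gnext G (f i) := by
    intro i
    simp [hf, Function.iterate_succ_apply']
  -- basic step facts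
  have hstep : ∀ i, f i ≠ last → G.Adj (f i) (f (i + 1)) ∧ f i < f (i + 1) := by
    intro i hi
    have hu' : (f i : ℕ) + 1 < n := by
      have := (f i).isLt
      have : (f i : ℕ) ≠ n - 1 := fun h => hi (Fin.ext h)
      omega
    have hadj := hham (f i) hu'
    have hlt : f i < ⟨(f i : ℕ) + 1, hu'⟩ := by simp [Fin.lt_def]
    rw [hfs]
    exact gnext_mem G (f i) _ hadj hlt
  have hmono : ∀ i, f i ≤ f (i + 1) := by
    intro i; rw [hfs]; exact le_gnext G (f i)
  -- f reaches last
  have hreach : ∀ i, min i (n - 1) ≤ (f i : ℕ) := by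
    intro i
    induction i with
    | zero => simp
    | succ i ih =>
      by_cases hi : f i = last
      · have : f (i + 1) = last := by rw [hfs, hi, hlastdef]; exact gnext_last G (by omega)
        rw [this]
        simp only [hlastdef]
        omega
      · have h1 := (hstep i hi).2
        have h2 : (f i : ℕ) ≠ n - 1 := fun h => hi (Fin.ext h)
        have h3 := (f i).isLt
        simp only [Fin.lt_def] at h1
        omega
  have hex : ∃ i, f i = last := by
    refine ⟨n - 1, Fin.ext ?_⟩
    have := hreach (n - 1)
    have := (f (n - 1)).isLt
    simp only [hlastdef]
    omega
  set m := Nat.find hex with hm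
  have hfm : f m = last := Nat.find_spec hex
  have hflt : ∀ j, j < m → f j ≠ last := fun j hj => Nat.find_min hex hj
  -- strict monotone up to m
  have hsm : ∀ i j, i < j → j ≤ m → f i < f j := by
    intro i j hij hjm
    induction j with
    | zero => omega
    | succ j ih =>
      have hj : f j ≠ last := hflt j (by omega)
      have h1 := (hstep j hj).2
      rcases Nat.lt_or_ge i j with h | h
      · exact lt_trans (ih h (by omega)) h1
      · have : i = j := by omega
        rw [this]; exact h1
  -- every value below f (i+1) or above is non-adjacent to f i if gap ≥ 2
  have hmaxnb : ∀ i (v : Fin n), G.Adj (f i) v → f i < v → v ≤ f (i + 1) := by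
    intro i v hadj hlt
    rw [hfs]
    exact gnext_le G (f i) v hadj hlt
  -- size bound: k * (f i) ≤ i * (n-1)
  have hsize : ∀ i, i ≤ m → k * (f i : ℕ) ≤ i * (n - 1) := by
    intro i him
    induction i with
    | zero => simp [hf]
    | succ i ih =>
      have hi : f i ≠ last := hflt i (by omega)
      obtain ⟨hadj, hlt⟩ := hstep i hi
      have hd := hshort (f i) (f (i + 1)) hadj
      simp only [Fin.lt_def] at hlt
      have hdd : ((f (i+1) : ℤ) - (f i : ℤ)).natAbs = (f (i+1) : ℕ) - (f i : ℕ) := by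
        omega
      rw [hdd] at hd
      have ih' := ih (by omega)
      have : k * (f (i+1) : ℕ) = k * (f i : ℕ) + k * ((f (i+1) : ℕ) - (f i : ℕ)) := by
        rw [← Nat.mul_add]
        congr 1
        omega
      calc k * (f (i+1) : ℕ) = k * (f i : ℕ) + k * ((f (i+1) : ℕ) - (f i : ℕ)) := this
        _ ≤ i * (n - 1) + (n - 1) := by
            have : k * ((f (i+1) : ℕ) - (f i : ℕ)) ≤ n - 1 := by
              rw [Nat.mul_comm]; exact hd
            omega
        _ = (i + 1) * (n - 1) := by ring
  have hkm : k ≤ m := by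
    have h1 := hsize m le_rfl
    have h2 : (f m : ℕ) = n - 1 := by rw [hfm]
    rw [h2] at h1
    have hpos : 0 < n - 1 := by omega
    exact Nat.le_of_mul_le_mul_right h1 hpos
  -- build the path
  refine ⟨m + 1, by omega, fun i => f i, ?_, ?_⟩
  · intro i j hij
    exact hsm i j hij (by omega)
  · intro i j
    constructor
    · intro hadj
      by_contra hcon
      push_neg at hcon
      obtain ⟨hc1, hc2⟩ := hcon
      rcases lt_trichotomy (i : ℕ) (j : ℕ) with h | h | h
      · -- i < j, j ≠ i+1, so i+2 ≤ j
        have hij2 : (i : ℕ) + 2 ≤ (j : ℕ) := by omega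
        have hlt : f i < f j := hsm i j h (by omega)
        have hle := hmaxnb i (f j) hadj hlt
        have : f ((i : ℕ) + 1) < f j := hsm ((i : ℕ) + 1) j (by omega) (by omega)
        exact absurd hle (not_le.mpr this)
      · rw [Fin.val_eq_val] at h
        rw [h] at hadj
        exact G.irrefl hadj
      · have hji2 : (j : ℕ) + 2 ≤ (i : ℕ) := by omega
        have hlt : f j < f i := hsm j i h (by omega)
        have hle := hmaxnb j (f i) hadj.symm hlt
        have : f ((j : ℕ) + 1) < f i := hsm ((j : ℕ) + 1) i (by omega) (by omega)
        exact absurd hle (not_le.mpr this)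
    · intro hcon
      rcases hcon with h | h
      · have hi : f i ≠ last := hflt i (by omega)
        have := (hstep (i : ℕ) hi).1
        rwa [h] at this
      · have hj : f j ≠ last := hflt j (by omega)
        have := (hstep (j : ℕ) hj).1
        rw [h] at this
        exact this.symm
end

section
/- For every integer p ≥ 0 there exists an ordered graph (G, ≺) on 2^p + 1 vertices that is ordered along a Hamiltonian path, whose entire edge set is non-crossing, and which contains no induced path of size 2p + 3. -/
def List.IsInducedPathIn {V : Type*} (G : SimpleGraph V) (l : List V) : Prop :=
  l.Nodup ∧ ∀ (i j : ℕ) (hi : i < l.length) (hj : j < l.length),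
    G.Adj l[i] l[j] ↔ (i + 1 = j ∨ j + 1 = i)

namespace List.IsInducedPathIn

variable {V W : Type*} {G : SimpleGraph V} {l l₁ l₂ : List V} {x y z : V}

theorem isChain (h : l.IsInducedPathIn G) : l.IsChain G.Adj :=
  List.isChain_iff_getElem.2 fun i hi => (h.2 i (i + 1) (by omega) hi).2 (Or.inl rfl)

theorem reverse (h : l.IsInducedPathIn G) : l.reverse.IsInducedPathIn G := by
  refine ⟨List.nodup_reverse.2 h.1, fun i j hi hj => ?_⟩
  simp only [List.length_reverse] at hi hj
  rw [List.getElem_reverse, List.getElem_reverse, h.2]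
  omega

theorem of_append_left (h : (l₁ ++ l₂).IsInducedPathIn G) : l₁.IsInducedPathIn G := by
  refine ⟨(List.nodup_append.1 h.1).1, fun i j hi hj => ?_⟩
  have := h.2 i j (by simp; omega) (by simp; omega)
  rwa [List.getElem_append_left hi, List.getElem_append_left hj] at this

theorem of_append_right (h : (l₁ ++ l₂).IsInducedPathIn G) : l₂.IsInducedPathIn G := by
  refine ⟨(List.nodup_append.1 h.1).2.1, fun i j hi hj => ?_⟩
  have := h.2 (l₁.length + i) (l₁.length + j) (by simp; omega) (by simp; omega)
  rw [List.getElem_append_right (by omega), List.getElem_append_right (by omega)] at this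
  simpa [add_assoc] using this

theorem of_cons (h : (x :: l).IsInducedPathIn G) : l.IsInducedPathIn G :=
  of_append_right (l₁ := [x]) h

theorem eq_cons_of_adj (h : (x :: l).IsInducedPathIn G) (hy : y ∈ l) (hxy : G.Adj x y) :
    ∃ l', l = y :: l' := by
  obtain ⟨j, hj, rfl⟩ := List.getElem_of_mem hy
  have := (h.2 0 (j + 1) (by simp) (by simpa using hj)).1 (by simpa using hxy)
  obtain rfl : j = 0 := by omega
  cases l with
  | nil => simp at hj
  | cons z l' => exact ⟨l', rfl⟩

theorem not_adj_of_adj_of_adj (h : l.IsInducedPathIn G) (hx : x ∈ l) (hy : y ∈ l) (hz : z ∈ l)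
    (hxy : G.Adj x y) (hyz : G.Adj y z) : ¬ G.Adj x z := by
  obtain ⟨i, hi, rfl⟩ := List.getElem_of_mem hx
  obtain ⟨j, hj, rfl⟩ := List.getElem_of_mem hy
  obtain ⟨k, hk, rfl⟩ := List.getElem_of_mem hz
  rw [h.2] at hxy hyz ⊢
  omega

theorem exists_eq_append_of_adj (h : l.IsInducedPathIn G) (hx : x ∈ l) (hy : y ∈ l)
    (hxy : G.Adj x y) : ∃ a b l₁ l₂, l = l₁ ++ a :: b :: l₂ ∧ s(a, b) = s(x, y) := by
  obtain ⟨i, hi, rfl⟩ := List.getElem_of_mem hx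
  obtain ⟨j, hj, rfl⟩ := List.getElem_of_mem hy
  have split : ∀ k (hk : k + 1 < l.length),
      l.take k ++ l[k] :: l[k + 1] :: l.drop (k + 1 + 1) = l := fun k hk => by
    rw [← List.drop_eq_getElem_cons, ← List.drop_eq_getElem_cons, List.take_append_drop]
  rcases (h.2 i j hi hj).1 hxy with rfl | rfl
  · exact ⟨_, _, _, _, (split i hj).symm, rfl⟩
  · exact ⟨_, _, _, _, (split j hi).symm, Sym2.eq_swap⟩

theorem map {H : SimpleGraph W} {f : V → W} (h : l.IsInducedPathIn (H.comap f))
    (hf : Function.Injective f) : (l.map f).IsInducedPathIn H :=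
  ⟨h.1.map hf, fun i j hi hj => by simpa using h.2 i j (by simpa using hi) (by simpa using hj)⟩

end List.IsInducedPathIn

theorem IsInducedPath.isInducedPathIn_ofFn {n s : ℕ} {G : SimpleGraph (Fin n)}
    {w : Fin s → Fin n} (h : IsInducedPath G w) : (List.ofFn w).IsInducedPathIn G :=
  ⟨List.nodup_ofFn.2 h.1, fun i j hi hj => by
    simpa using h.2 ⟨i, by simpa using hi⟩ ⟨j, by simpa using hj⟩⟩

theorem List.Nodup.length_le_of_forall_mem_Icc {l : List ℕ} {a b : ℕ} (h : l.Nodup)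
    (hl : ∀ x ∈ l, x ∈ Set.Icc a b) : l.length ≤ b + 1 - a := by
  classical
  rw [← List.toFinset_card_of_nodup h, ← Nat.card_Icc]
  exact Finset.card_le_card fun x hx => Finset.mem_Icc.2 (hl x (List.mem_toFinset.1 hx))

theorem Nat.add_le_of_dvd_of_dvd_of_lt {d x y : ℕ} (hx : d ∣ x) (hy : d ∣ y) (h : x < y) :
    x + d ≤ y := by
  have := Nat.le_of_dvd (Nat.sub_pos_of_lt h) (Nat.dvd_sub hy hx)
  omega

def dyadicGraph : SimpleGraph ℕ :=
  SimpleGraph.fromRel fun a b => ∃ k, 2 ^ k ∣ a ∧ b = a + 2 ^ k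

namespace dyadicGraph

theorem adj_iff_of_lt {a b : ℕ} (h : a < b) :
    dyadicGraph.Adj a b ↔ ∃ k, 2 ^ k ∣ a ∧ b = a + 2 ^ k := by
  rw [dyadicGraph, SimpleGraph.fromRel_adj]
  constructor
  · rintro ⟨-, hab | ⟨k, -, rfl⟩⟩
    · exact hab
    · have := Nat.two_pow_pos k
      omega
  · exact fun hab => ⟨h.ne, .inl hab⟩

theorem adj_add_pow {a k : ℕ} (h : 2 ^ k ∣ a) : dyadicGraph.Adj a (a + 2 ^ k) :=
  (adj_iff_of_lt (by have := Nat.two_pow_pos k; omega)).2 ⟨k, h, rfl⟩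

theorem adj_succ (a : ℕ) : dyadicGraph.Adj a (a + 1) :=
  adj_add_pow (k := 0) (one_dvd a)

theorem adj_add_pow_add_pow_succ {L q : ℕ} (h : 2 ^ q ∣ L) :
    dyadicGraph.Adj (L + 2 ^ q) (L + 2 ^ (q + 1)) := by
  rw [pow_succ, mul_two, ← add_assoc]
  exact adj_add_pow (dvd_add h dvd_rfl)

/-- Both ends of an edge `a, a + 2^k` are multiples of `2^k`, so no multiple of `2^k` lies
strictly inside it; the edge of higher level would have such ends. -/
theorem not_crossing {a b c d : ℕ} (hac : a < c) (hcb : c < b) (hbd : b < d)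
    (hab : dyadicGraph.Adj a b) (hcd : dyadicGraph.Adj c d) : False := by
  obtain ⟨k, hka, rfl⟩ := (adj_iff_of_lt (hac.trans hcb)).1 hab
  obtain ⟨l, hlc, rfl⟩ := (adj_iff_of_lt (hcb.trans hbd)).1 hcd
  rcases le_total k l with hkl | hlk
  · have := Nat.add_le_of_dvd_of_dvd_of_lt hka ((pow_dvd_pow 2 hkl).trans hlc) hac
    omega
  · have hkb := dvd_add ((pow_dvd_pow 2 hlk).trans hka) (pow_dvd_pow 2 hlk)
    have := Nat.add_le_of_dvd_of_dvd_of_lt hlc hkb hcb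
    omega

/-- Any other edge over the midpoint would cross `L, L + 2^q` or `L + 2^q, L + 2^(q+1)`. -/
theorem eq_of_adj_of_lt_of_lt {q L a b : ℕ} (hL : 2 ^ q ∣ L) (ha : L ≤ a) (ham : a < L + 2 ^ q)
    (hmb : L + 2 ^ q < b) (hb : b ≤ L + 2 ^ (q + 1)) (hab : dyadicGraph.Adj a b) :
    a = L ∧ b = L + 2 ^ (q + 1) := by
  constructor
  · by_contra hne
    exact not_crossing (lt_of_le_of_ne ha (Ne.symm hne)) ham hmb (adj_add_pow hL) hab
  · by_contra hne
    exact not_crossing ham hmb (lt_of_le_of_ne hb hne) hab (adj_add_pow_add_pow_succ hL)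

theorem forall_le_or_forall_ge_of_isChain {q L : ℕ} {l : List ℕ} (hL : 2 ^ q ∣ L)
    (hl : l.IsChain dyadicGraph.Adj) (hI : ∀ x ∈ l, x ∈ Set.Icc L (L + 2 ^ (q + 1)))
    (hm : L + 2 ^ q ∉ l.tail) (hLN : ¬(L ∈ l ∧ L + 2 ^ (q + 1) ∈ l)) :
    (∀ x ∈ l, x ≤ L + 2 ^ q) ∨ ∀ x ∈ l, L + 2 ^ q ≤ x := by
  induction l with
  | nil => simp
  | cons x t ih =>
    cases t with
    | nil => simp only [List.mem_singleton, forall_eq]; omega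
    | cons y t =>
      rw [List.isChain_cons_cons] at hl
      have hx := hI x (by simp)
      have hy := hI y (by simp)
      have hym : y ≠ L + 2 ^ q := fun h => hm (h ▸ List.mem_cons_self ..)
      have hxy : ¬(x < L + 2 ^ q ∧ L + 2 ^ q < y) := fun h =>
        hLN (by obtain ⟨rfl, rfl⟩ :=
          eq_of_adj_of_lt_of_lt hL hx.1 h.1 h.2 hy.2 hl.1; simp)
      have hyx : ¬(y < L + 2 ^ q ∧ L + 2 ^ q < x) := fun h =>
        hLN (by obtain ⟨rfl, rfl⟩ :=
          eq_of_adj_of_lt_of_lt hL hy.1 h.1 h.2 hx.2 hl.1.symm; simp)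
      rcases ih hl.2 (fun z hz => hI z (.tail _ hz)) (fun h => hm (.tail _ h))
        (fun h => hLN ⟨.tail _ h.1, .tail _ h.2⟩) with h | h
      · exact .inl (List.forall_mem_cons.2 ⟨by have := h y (by simp); omega, h⟩)
      · exact .inr (List.forall_mem_cons.2 ⟨by have := h y (by simp); omega, h⟩)

theorem exists_half_containing {q L : ℕ} {l : List ℕ} (hL : 2 ^ q ∣ L)
    (hl : l.IsChain dyadicGraph.Adj) (hI : ∀ x ∈ l, x ∈ Set.Icc L (L + 2 ^ (q + 1)))
    (hm : L + 2 ^ q ∉ l.tail) (hLN : ¬(L ∈ l ∧ L + 2 ^ (q + 1) ∈ l)) :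
    ∃ L', 2 ^ q ∣ L' ∧ (L' = L ∨ L' = L + 2 ^ q) ∧ ∀ x ∈ l, x ∈ Set.Icc L' (L' + 2 ^ q) := by
  rcases forall_le_or_forall_ge_of_isChain hL hl hI hm hLN with h | h
  · exact ⟨L, hL, .inl rfl, fun x hx => ⟨(hI x hx).1, h x hx⟩⟩
  · refine ⟨L + 2 ^ q, dvd_add hL dvd_rfl, .inr rfl, fun x hx => ⟨h x hx, ?_⟩⟩
    have := (hI x hx).2
    omega

theorem length_le_of_head_eq_endpoint (q : ℕ) {L e : ℕ} {t : List ℕ} (hL : 2 ^ q ∣ L)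
    (hl : (e :: t).IsInducedPathIn dyadicGraph)
    (hI : ∀ x ∈ e :: t, x ∈ Set.Icc L (L + 2 ^ q)) (he : e = L ∨ e = L + 2 ^ q) :
    (e :: t).length ≤ q + 2 := by
  induction q generalizing L e t with
  | zero =>
    have := hl.1.length_le_of_forall_mem_Icc hI
    simp only [pow_zero, List.length_cons] at this ⊢
    omega
  | succ q ih =>
    have hq : 2 ^ q ∣ L := (pow_dvd_pow 2 q.le_succ).trans hL
    have hpow := Nat.two_pow_pos q
    have hmiss : ∀ l : List ℕ, e ∉ l → ¬(L ∈ l ∧ L + 2 ^ (q + 1) ∈ l) := fun l hel h => by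
      rcases he with rfl | rfl
      exacts [hel h.1, hel h.2]
    have he_notin : e ∉ t := (List.nodup_cons.1 hl.1).1
    by_cases hmt : L + 2 ^ q ∈ t
    · have hem : dyadicGraph.Adj e (L + 2 ^ q) := by
        rcases he with rfl | rfl
        exacts [adj_add_pow hq, (adj_add_pow_add_pow_succ hq).symm]
      obtain ⟨t', rfl⟩ := hl.eq_cons_of_adj hmt hem
      obtain ⟨L', hdvd, hL', hsub⟩ := exists_half_containing hq hl.of_cons.isChain
        (fun x hx => hI x (.tail _ hx)) (List.nodup_cons.1 hl.of_cons.1).1 (hmiss _ he_notin)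
      have := ih hdvd hl.of_cons hsub (by omega)
      simp only [List.length_cons] at this ⊢
      omega
    by_cases hboth : L ∈ e :: t ∧ L + 2 ^ (q + 1) ∈ e :: t
    · obtain ⟨e', he't, hee', he'⟩ :
          ∃ e' ∈ t, dyadicGraph.Adj e e' ∧ (e' = L ∨ e' = L + 2 ^ (q + 1)) := by
        rcases he with rfl | rfl
        · exact ⟨_, (List.mem_cons.1 hboth.2).resolve_left (by omega), adj_add_pow hL, .inr rfl⟩
        · exact ⟨_, (List.mem_cons.1 hboth.1).resolve_left (by omega), (adj_add_pow hL).symm,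
            .inl rfl⟩
      obtain ⟨t', rfl⟩ := hl.eq_cons_of_adj he't hee'
      obtain ⟨L', hdvd, hL', hsub⟩ := exists_half_containing hq hl.of_cons.isChain
        (fun x hx => hI x (.tail _ hx)) (fun h => hmt (.tail _ h)) (hmiss _ he_notin)
      have := ih hdvd hl.of_cons hsub (by obtain ⟨_, _⟩ := hsub e' (by simp); omega)
      simp only [List.length_cons] at this ⊢
      omega
    · obtain ⟨L', hdvd, hL', hsub⟩ := exists_half_containing hq hl.isChain hI hmt hboth
      have := ih hdvd hl hsub (by obtain ⟨_, _⟩ := hsub e (by simp); omega)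
      omega

theorem length_le_of_mid_mem {q L : ℕ} {l : List ℕ} (hL : 2 ^ (q + 1) ∣ L)
    (hl : l.IsInducedPathIn dyadicGraph) (hI : ∀ x ∈ l, x ∈ Set.Icc L (L + 2 ^ (q + 1)))
    (hml : L + 2 ^ q ∈ l) : l.length ≤ 2 * q + 3 := by
  have hq : 2 ^ q ∣ L := (pow_dvd_pow 2 q.le_succ).trans hL
  have hLN : ¬(L ∈ l ∧ L + 2 ^ (q + 1) ∈ l) := fun h =>
    hl.not_adj_of_adj_of_adj h.1 hml h.2 (adj_add_pow hq) (adj_add_pow_add_pow_succ hq)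
      (adj_add_pow hL)
  obtain ⟨l₁, l₂, rfl⟩ := List.append_of_mem hml
  have hm := List.nodup_middle.1 hl.1
  rw [List.nodup_cons, List.mem_append, not_or] at hm
  have hl₁ : ((L + 2 ^ q) :: l₁.reverse).IsInducedPathIn dyadicGraph := by
    rw [List.append_cons] at hl
    simpa using hl.of_append_left.reverse
  have hl₂ : ((L + 2 ^ q) :: l₂).IsInducedPathIn dyadicGraph := hl.of_append_right
  have hs₁ : (L + 2 ^ q) :: l₁.reverse ⊆ l₁ ++ (L + 2 ^ q) :: l₂ := fun x hx => by
    simp only [List.mem_cons, List.mem_reverse, List.mem_append] at hx ⊢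
    tauto
  have hs₂ : (L + 2 ^ q) :: l₂ ⊆ l₁ ++ (L + 2 ^ q) :: l₂ := List.subset_append_right _ _
  obtain ⟨L₁, hdvd₁, hL₁, hsub₁⟩ := exists_half_containing hq hl₁.isChain
    (fun x hx => hI x (hs₁ hx)) (List.mem_reverse.not.2 hm.1.1) (fun h => hLN ⟨hs₁ h.1, hs₁ h.2⟩)
  obtain ⟨L₂, hdvd₂, hL₂, hsub₂⟩ := exists_half_containing hq hl₂.isChain
    (fun x hx => hI x (hs₂ hx)) hm.1.2 (fun h => hLN ⟨hs₂ h.1, hs₂ h.2⟩)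
  have h₁ := length_le_of_head_eq_endpoint q hdvd₁ hl₁ hsub₁ (by omega)
  have h₂ := length_le_of_head_eq_endpoint q hdvd₂ hl₂ hsub₂ (by omega)
  simp only [List.length_cons, List.length_reverse, List.length_append] at h₁ h₂ ⊢
  omega

theorem length_le_of_endpoints_mem {q L : ℕ} {l : List ℕ} (hL : 2 ^ (q + 1) ∣ L)
    (hl : l.IsInducedPathIn dyadicGraph) (hI : ∀ x ∈ l, x ∈ Set.Icc L (L + 2 ^ (q + 1)))
    (hml : L + 2 ^ q ∉ l) (hLN : L ∈ l ∧ L + 2 ^ (q + 1) ∈ l) : l.length ≤ 2 * q + 4 := by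
  have hq : 2 ^ q ∣ L := (pow_dvd_pow 2 q.le_succ).trans hL
  obtain ⟨a, b, l₁, l₂, rfl, hab⟩ := hl.exists_eq_append_of_adj hLN.1 hLN.2 (adj_add_pow hL)
  rw [Sym2.eq_iff] at hab
  rw [List.append_cons] at hl hI hml
  have hl₁ : (a :: l₁.reverse).IsInducedPathIn dyadicGraph := by
    simpa using hl.of_append_left.reverse
  have hl₂ : (b :: l₂).IsInducedPathIn dyadicGraph := hl.of_append_right
  have hs₁ : a :: l₁.reverse ⊆ l₁ ++ [a] := fun x hx => by
    simp only [List.mem_cons, List.mem_reverse, List.mem_append] at hx ⊢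
    tauto
  have hdisj : ∀ x ∈ l₁ ++ [a], x ∉ b :: l₂ := fun x hx hx' =>
    (List.nodup_append.1 hl.1).2.2 x hx x hx' rfl
  have hb : b ∉ a :: l₁.reverse := fun h => hdisj b (hs₁ h) (List.mem_cons_self ..)
  have ha : a ∉ b :: l₂ := hdisj a (by simp)
  obtain ⟨L₁, hdvd₁, hL₁, hsub₁⟩ := exists_half_containing hq hl₁.isChain
    (fun x hx => hI x (List.subset_append_left _ _ (hs₁ hx)))
    (fun h => hml (List.subset_append_left _ _ (hs₁ (.tail _ h))))
    (fun h => hb (by rcases hab with ⟨-, rfl⟩ | ⟨-, rfl⟩; exacts [h.2, h.1]))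
  obtain ⟨L₂, hdvd₂, hL₂, hsub₂⟩ := exists_half_containing hq hl₂.isChain
    (fun x hx => hI x (List.subset_append_right _ _ hx))
    (fun h => hml (List.subset_append_right _ _ (.tail _ h)))
    (fun h => ha (by rcases hab with ⟨rfl, -⟩ | ⟨rfl, -⟩; exacts [h.1, h.2]))
  have h₁ := length_le_of_head_eq_endpoint q hdvd₁ hl₁ hsub₁
    (by obtain ⟨_, _⟩ := hsub₁ a (by simp); omega)
  have h₂ := length_le_of_head_eq_endpoint q hdvd₂ hl₂ hsub₂
    (by obtain ⟨_, _⟩ := hsub₂ b (by simp); omega)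
  simp only [List.length_cons, List.length_reverse, List.length_append] at h₁ h₂ ⊢
  omega

theorem length_le (q : ℕ) {L : ℕ} {l : List ℕ} (hL : 2 ^ q ∣ L)
    (hl : l.IsInducedPathIn dyadicGraph) (hI : ∀ x ∈ l, x ∈ Set.Icc L (L + 2 ^ q)) :
    l.length ≤ 2 * q + 2 := by
  induction q generalizing L l with
  | zero =>
    have := hl.1.length_le_of_forall_mem_Icc hI
    simp only [pow_zero] at this
    omega
  | succ q ih =>
    by_cases hml : L + 2 ^ q ∈ l
    · exact (length_le_of_mid_mem hL hl hI hml).trans (by omega)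
    by_cases hLN : L ∈ l ∧ L + 2 ^ (q + 1) ∈ l
    · exact length_le_of_endpoints_mem hL hl hI hml hLN
    obtain ⟨L', hdvd, -, hsub⟩ := exists_half_containing ((pow_dvd_pow 2 q.le_succ).trans hL)
      hl.isChain hI (fun h => hml (List.mem_of_mem_tail h)) hLN
    exact (ih hdvd hl hsub).trans (by omega)

end dyadicGraph

/-- for every `p ≥ 0` there is an ordered graph on `2^p + 1` vertices,
ordered along a Hamiltonian path, whose edge set is non-crossing, with no induced path
of size `2p + 3`. -/
theorem stmt11 (p : ℕ) :
    ∃ G : SimpleGraph (Fin (2 ^ p + 1)),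
      OrderedAlongHamPath G ∧ NonCrossing G.edgeSet ∧
      ¬ ∃ w : Fin (2 * p + 3) → Fin (2 ^ p + 1), IsInducedPath G w := by
  refine ⟨dyadicGraph.comap Fin.val, fun i _ => dyadicGraph.adj_succ i, ?_, ?_⟩
  · rintro ⟨a, b, c, d, hac, hcb, hbd, hab, hcd⟩
    exact dyadicGraph.not_crossing hac hcb hbd hab hcd
  · rintro ⟨w, hw⟩
    have := dyadicGraph.length_le p (dvd_zero _) (hw.isInducedPathIn_ofFn.map Fin.val_injective)
      fun x hx => by
        obtain ⟨y, -, rfl⟩ := List.mem_map.1 hx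
        exact ⟨Nat.zero_le _, by have := y.2; omega⟩
    simp only [List.length_map, List.length_ofFn] at this
    omega
end
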